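/- Define a(r, x) := (r − 1)/(1 − x) + 1/(1 − x)². For every integer M ≥ 1, every function g : ℕ → ℂ, and every q ∈ ℂ with q^M ≠ 1, one has Σ_{r ∣ M} (M/r) · g(M/r) · a(r, q^r) = Σ_{r ∣ M} Σ_ζ [ (G₁(M/r) − M^{−2}·G₃(M/r)) / (1 − ζq) + (M^{−2}·G₃(M/r)) / (1 − ζq)² ], where r runs over the positive divisors of M, the inner sum runs over the primitive r-th roots of unity ζ in ℂ, and G_γ(d) := Σ_{k ∣ d} k^γ · g(k) (sum over positive divisors k of d). -/

import Mathlib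

open Finset

/-- The multiple-cover function `a(r, x) = (r − 1)/(1 − x) + 1/(1 − x)²`. -/
noncomputable def mcA (r : ℕ) (x : ℂ) : ℂ :=
  ((r : ℂ) - 1) / (1 - x) + 1 / (1 - x) ^ 2

/-- `G_γ(d) = Σ_{k ∣ d} k^γ · g(k)`, sum over positive divisors `k` of `d`. -/
noncomputable def GVsum (g : ℕ → ℂ) (γ : ℤ) (d : ℕ) : ℂ :=
  ∑ k ∈ d.divisors, (k : ℂ) ^ γ * g k

/-!
For `w ^ r = x ≠ 1`, multiplying by `1 - w` shows that `S(w) = ∑_{j<r} w^j` and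
`T(w) = ∑_{j<r} (j+1) w^j` satisfy `(1 - w) S = 1 - x` and `(1 - w) T = S - r x`, so `1/(1 - w)`
and `1/(1 - w)²` are polynomials of degree `< r` in `w` divided by powers of `1 - x`. Summing over
`w = ζ q` with `ζ ^ r = 1` keeps only constant terms, which gives
`a(r, q^r) = ∑_{ζ^r = 1} ((1 - r⁻²)/(1 - ζq) + r⁻²/(1 - ζq)²)`.
Splitting the `r`-th roots of unity by their exact order `d ∣ r` and putting `k = M/r`, the double
sum runs over the pairs `(k, d)` with `k d ∣ M`; for fixed `d` the coefficients
`k g(k) (1 - k²/M²)` and `k g(k) k²/M²` add up over `k ∣ M/d` to `G₁ - M⁻² G₃` and `M⁻² G₃`.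
-/

open Polynomial

theorem one_sub_mul_sum_range_succ_mul_pow {R : Type*} [CommRing R] (w : R) (n : ℕ) :
    (1 - w) * ∑ j ∈ range n, ((j : R) + 1) * w ^ j = ∑ j ∈ range n, w ^ j - n * w ^ n := by
  induction n with
  | zero => simp
  | succ n ih =>
    rw [sum_range_succ, sum_range_succ, mul_add, ih]
    push_cast
    ring

section RootsOfUnity

variable {R : Type*} [CommRing R] [IsDomain R] {ω : R} {r : ℕ}

theorem mul_pow_eq_of_mem_nthRootsFinset {ζ : R} (hζ : ζ ∈ nthRootsFinset r (1 : R)) (q : R) :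
    (ζ * q) ^ r = q ^ r := by
  rcases r.eq_zero_or_pos with rfl | hr
  · simp
  rw [mul_pow, (mem_nthRootsFinset hr 1).mp hζ, one_mul]

theorem IsPrimitiveRoot.sum_nthRootsFinset_one {β : Type*} [AddCommMonoid β]
    (hω : IsPrimitiveRoot ω r) (f : R → β) :
    ∑ ζ ∈ nthRootsFinset r (1 : R), f ζ = ∑ i ∈ range r, f (ω ^ i) := by
  rcases r.eq_zero_or_pos with rfl | hr
  · simp
  have := NeZero.of_pos hr
  refine (sum_bij (fun i _ => ω ^ i) (fun i _ => ?_) (fun i hi j hj hij => ?_)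
    (fun ζ hζ => ?_) (fun _ _ => rfl)).symm
  · rw [Polynomial.mem_nthRootsFinset hr, ← pow_mul, mul_comm, pow_mul, hω.pow_eq_one, one_pow]
  · exact hω.pow_inj (mem_range.mp hi) (mem_range.mp hj) hij
  · obtain ⟨i, hi, rfl⟩ := hω.eq_pow_of_pow_eq_one ((Polynomial.mem_nthRootsFinset hr 1).mp hζ)
    exact ⟨i, mem_range.mpr hi, rfl⟩

theorem IsPrimitiveRoot.sum_nthRootsFinset_pow (hω : IsPrimitiveRoot ω r) (j : ℕ) :
    ∑ ζ ∈ nthRootsFinset r (1 : R), ζ ^ j = if r ∣ j then (r : R) else 0 := by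
  simp_rw [hω.sum_nthRootsFinset_one, ← pow_mul, mul_comm _ j, pow_mul]
  split_ifs with hj
  · simp [(hω.pow_eq_one_iff_dvd j).mpr hj]
  · have hne : ω ^ j - 1 ≠ 0 := sub_ne_zero.mpr fun h => hj ((hω.pow_eq_one_iff_dvd j).mp h)
    have hgeom := geom_sum_mul (ω ^ j) r
    rw [pow_right_comm, hω.pow_eq_one, one_pow, sub_self] at hgeom
    exact (mul_eq_zero.mp hgeom).resolve_right hne

theorem IsPrimitiveRoot.sum_nthRootsFinset_sum_range_mul_pow (hω : IsPrimitiveRoot ω r)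
    (c : ℕ → R) (q : R) :
    ∑ ζ ∈ nthRootsFinset r (1 : R), ∑ j ∈ range r, c j * (ζ * q) ^ j = r * c 0 := by
  rw [sum_comm]
  calc ∑ j ∈ range r, ∑ ζ ∈ nthRootsFinset r (1 : R), c j * (ζ * q) ^ j
      = ∑ j ∈ range r, c j * q ^ j * ∑ ζ ∈ nthRootsFinset r (1 : R), ζ ^ j := by
        simp_rw [mul_sum, mul_pow, mul_comm, mul_assoc]
    _ = ∑ j ∈ range r, if j = 0 then (r : R) * c 0 else 0 := by
        refine sum_congr rfl fun j hj => ?_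
        rw [hω.sum_nthRootsFinset_pow]
        rcases Nat.eq_zero_or_pos j with rfl | hj0
        · simp [mul_comm]
        · simp [hj0.ne', Nat.not_dvd_of_pos_of_lt hj0 (mem_range.mp hj)]
    _ = r * c 0 := by
        rcases r.eq_zero_or_pos with rfl | hr
        · simp
        · simp [hr]

end RootsOfUnity

section Field

variable {K : Type*} [Field K] {r : ℕ} {w x : K}

theorem inv_one_sub_eq_geom_sum_div (hw : w ^ r = x) (hx : x ≠ 1) :
    (1 - w)⁻¹ = (∑ j ∈ range r, w ^ j) / (1 - x) := by
  have hgeom := mul_neg_geom_sum w r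
  have hw1 : 1 - w ≠ 0 := by
    intro h
    rw [h, zero_mul, hw] at hgeom
    exact hx (sub_eq_zero.mp hgeom.symm).symm
  rw [eq_div_iff (sub_ne_zero.mpr hx.symm), ← hw, ← hgeom, inv_mul_cancel_left₀ hw1]

theorem inv_one_sub_sq_eq (hw : w ^ r = x) (hx : x ≠ 1) :
    ((1 - w) ^ 2)⁻¹ = (∑ j ∈ range r, ((j : K) + 1) * w ^ j
      + r * x * (∑ j ∈ range r, w ^ j) / (1 - x)) / (1 - x) := by
  have hS := mul_neg_geom_sum w r
  have hT := one_sub_mul_sum_range_succ_mul_pow w r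
  rw [hw] at hS hT
  have hx1 : 1 - x ≠ 0 := sub_ne_zero.mpr hx.symm
  have hw1 : 1 - w ≠ 0 := by
    rintro h
    rw [h, zero_mul] at hS
    exact hx1 hS.symm
  field_simp
  linear_combination (-(1 - w) * (1 - x)) * hT + (-(1 - x) - r * x * (1 - w)) * hS

variable {ω : K}

theorem IsPrimitiveRoot.sum_nthRootsFinset_inv_one_sub_mul (hω : IsPrimitiveRoot ω r) {q : K}
    (hq : q ^ r ≠ 1) :
    ∑ ζ ∈ nthRootsFinset r (1 : K), (1 - ζ * q)⁻¹ = r / (1 - q ^ r) := by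
  have hS := hω.sum_nthRootsFinset_sum_range_mul_pow 1 q
  simp only [Pi.one_apply, one_mul, mul_one] at hS
  rw [sum_congr rfl fun ζ hζ =>
    inv_one_sub_eq_geom_sum_div (mul_pow_eq_of_mem_nthRootsFinset hζ q) hq, ← sum_div, hS]

theorem IsPrimitiveRoot.sum_nthRootsFinset_inv_one_sub_mul_sq (hω : IsPrimitiveRoot ω r) {q : K}
    (hq : q ^ r ≠ 1) :
    ∑ ζ ∈ nthRootsFinset r (1 : K), ((1 - ζ * q) ^ 2)⁻¹
      = r / (1 - q ^ r) + r ^ 2 * q ^ r / (1 - q ^ r) ^ 2 := by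
  have hS := hω.sum_nthRootsFinset_sum_range_mul_pow 1 q
  have hT := hω.sum_nthRootsFinset_sum_range_mul_pow (fun j => (j : K) + 1) q
  simp only [Pi.one_apply, one_mul, mul_one, Nat.cast_zero, zero_add] at hS hT
  have hx1 : 1 - q ^ r ≠ 0 := sub_ne_zero.mpr hq.symm
  rw [sum_congr rfl fun ζ hζ =>
    inv_one_sub_sq_eq (mul_pow_eq_of_mem_nthRootsFinset hζ q) hq, ← sum_div, sum_add_distrib,
    ← sum_div, ← mul_sum, hS, hT]
  field_simp

end Field

theorem Nat.mem_divisors_and_mem_divisors_div_iff {k d M : ℕ} :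
    k ∈ M.divisors ∧ d ∈ (M / k).divisors ↔ k * d ∣ M ∧ M ≠ 0 := by
  simp only [Nat.mem_divisors]
  constructor
  · rintro ⟨⟨hkM, hM⟩, hdk, -⟩
    exact ⟨(Nat.dvd_div_iff_mul_dvd hkM).mp hdk, hM⟩
  · rintro ⟨hkd, hM⟩
    have hkM : k ∣ M := (dvd_mul_right k d).trans hkd
    have hk : 0 < k := Nat.pos_of_dvd_of_pos hkM (Nat.pos_of_ne_zero hM)
    exact ⟨⟨hkM, hM⟩, (Nat.dvd_div_iff_mul_dvd hkM).mpr hkd,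
      (Nat.div_pos (Nat.le_of_dvd (Nat.pos_of_ne_zero hM) hkM) hk).ne'⟩

theorem Nat.sum_divisors_sum_divisors_div_comm {β : Type*} [AddCommMonoid β] (M : ℕ)
    (F : ℕ → ℕ → β) :
    ∑ k ∈ M.divisors, ∑ d ∈ (M / k).divisors, F k d
      = ∑ d ∈ M.divisors, ∑ k ∈ (M / d).divisors, F k d :=
  sum_comm' fun k d => by
    rw [Nat.mem_divisors_and_mem_divisors_div_iff, and_comm (a := k ∈ _),
      Nat.mem_divisors_and_mem_divisors_div_iff, mul_comm]

noncomputable def mcAFraction (r : ℕ) (w : ℂ) : ℂ :=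
  (1 - ((r : ℂ) ^ 2)⁻¹) * (1 - w)⁻¹ + ((r : ℂ) ^ 2)⁻¹ * ((1 - w) ^ 2)⁻¹

theorem mcA_pow_eq_sum_nthRootsFinset {r : ℕ} {q : ℂ} (hq : q ^ r ≠ 1) :
    mcA r (q ^ r) = ∑ ζ ∈ nthRootsFinset r (1 : ℂ), mcAFraction r (ζ * q) := by
  have hr : r ≠ 0 := by
    rintro rfl
    exact hq (pow_zero q)
  have hω := Complex.isPrimitiveRoot_exp r hr
  have hx1 : 1 - q ^ r ≠ 0 := sub_ne_zero.mpr hq.symm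
  simp only [mcAFraction, sum_add_distrib, ← mul_sum, hω.sum_nthRootsFinset_inv_one_sub_mul hq,
    hω.sum_nthRootsFinset_inv_one_sub_mul_sq hq, mcA]
  field_simp
  ring

theorem mcA_pow_eq_sum_divisors_sum_primitiveRoots {r : ℕ} {q : ℂ} (hq : q ^ r ≠ 1) :
    mcA r (q ^ r) = ∑ d ∈ r.divisors, ∑ ζ ∈ primitiveRoots d ℂ, mcAFraction r (ζ * q) := by
  classical
  rw [mcA_pow_eq_sum_nthRootsFinset hq, IsPrimitiveRoot.nthRoots_one_eq_biUnion_primitiveRoots,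
    sum_biUnion fun _ _ _ _ hij => IsPrimitiveRoot.disjoint hij]

theorem natCast_mul_mcAFraction_div {k M : ℕ} (hk : k ∣ M) (w : ℂ) :
    (k : ℂ) * mcAFraction (M / k) w
      = ((k : ℂ) ^ (1 : ℤ) - (M : ℂ) ^ (-2 : ℤ) * (k : ℂ) ^ (3 : ℤ)) / (1 - w)
        + (M : ℂ) ^ (-2 : ℤ) * (k : ℂ) ^ (3 : ℤ) / (1 - w) ^ 2 := by
  rw [mcAFraction, Nat.cast_div_charZero hk, ← inv_pow, inv_div, zpow_neg]
  simp only [zpow_ofNat]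
  ring

theorem sum_divisors_mul_mcAFraction {N M : ℕ} (hN : N ∣ M) (g : ℕ → ℂ) (w : ℂ) :
    ∑ k ∈ N.divisors, (k : ℂ) * g k * mcAFraction (M / k) w
      = (GVsum g 1 N - (M : ℂ) ^ (-2 : ℤ) * GVsum g 3 N) / (1 - w)
        + (M : ℂ) ^ (-2 : ℤ) * GVsum g 3 N / (1 - w) ^ 2 := by
  simp only [GVsum, mul_sum, ← sum_sub_distrib, sum_div, ← sum_add_distrib]
  refine sum_congr rfl fun k hk => ?_
  rw [mul_right_comm, natCast_mul_mcAFraction_div ((Nat.dvd_of_mem_divisors hk).trans hN)]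
  ring

theorem stmt_4_general (M : ℕ) (g : ℕ → ℂ) (q : ℂ) (hq : q ^ M ≠ 1) :
    ∑ r ∈ M.divisors, ((M / r : ℕ) : ℂ) * g (M / r) * mcA r (q ^ r) =
      ∑ r ∈ M.divisors, ∑ ζ ∈ primitiveRoots r ℂ,
        ((GVsum g 1 (M / r) - (M : ℂ) ^ (-2 : ℤ) * GVsum g 3 (M / r)) / (1 - ζ * q) +
          ((M : ℂ) ^ (-2 : ℤ) * GVsum g 3 (M / r)) / (1 - ζ * q) ^ 2) := by
  have hq_div : ∀ k ∈ M.divisors, q ^ (M / k) ≠ 1 := fun k hk h => hq <| by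
    rw [← Nat.div_mul_cancel (Nat.dvd_of_mem_divisors hk), pow_mul, h, one_pow]
  calc ∑ r ∈ M.divisors, ((M / r : ℕ) : ℂ) * g (M / r) * mcA r (q ^ r)
      = ∑ k ∈ M.divisors, (k : ℂ) * g k * mcA (M / k) (q ^ (M / k)) := by
        rw [← Nat.sum_div_divisors]
        refine sum_congr rfl fun k hk => ?_
        rw [Nat.div_div_self (Nat.dvd_of_mem_divisors hk) (Nat.ne_zero_of_mem_divisors hk)]
    _ = ∑ k ∈ M.divisors, ∑ d ∈ (M / k).divisors, ∑ ζ ∈ primitiveRoots d ℂ,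
          (k : ℂ) * g k * mcAFraction (M / k) (ζ * q) := by
        refine sum_congr rfl fun k hk => ?_
        simp only [mcA_pow_eq_sum_divisors_sum_primitiveRoots (hq_div k hk), mul_sum]
    _ = ∑ d ∈ M.divisors, ∑ ζ ∈ primitiveRoots d ℂ, ∑ k ∈ (M / d).divisors,
          (k : ℂ) * g k * mcAFraction (M / k) (ζ * q) := by
        rw [Nat.sum_divisors_sum_divisors_div_comm]
        exact sum_congr rfl fun d _ => sum_comm
    _ = _ := sum_congr rfl fun d hd => sum_congr rfl fun ζ _ =>
        sum_divisors_mul_mcAFraction (Nat.div_dvd_of_dvd (Nat.dvd_of_mem_divisors hd)) g _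

/-- Partial fraction expansion of the `a`-part:
`Σ_{r ∣ M} (M/r)·g(M/r)·a(r, q^r)
  = Σ_{r ∣ M} Σ_ζ [ (G₁(M/r) − M⁻²·G₃(M/r))/(1 − ζq) + M⁻²·G₃(M/r)/(1 − ζq)² ]`,
the inner sum running over the primitive `r`-th roots of unity `ζ` in `ℂ`. -/
theorem stmt_4 (M : ℕ) (hM : 1 ≤ M) (g : ℕ → ℂ) (q : ℂ) (hq : q ^ M ≠ 1) :
    ∑ r ∈ M.divisors, ((M / r : ℕ) : ℂ) * g (M / r) * mcA r (q ^ r) =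
      ∑ r ∈ M.divisors, ∑ ζ ∈ primitiveRoots r ℂ,
        ((GVsum g 1 (M / r) - (M : ℂ) ^ (-2 : ℤ) * GVsum g 3 (M / r)) / (1 - ζ * q) +
          ((M : ℂ) ^ (-2 : ℤ) * GVsum g 3 (M / r)) / (1 - ζ * q) ^ 2) :=
  stmt_4_general M g q hq
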